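/- arXiv:0807.0604 — 3 statements merged into one kernel-verified Lean document; each statement's English description precedes it below -/
import Mathlib

section
/- For any multi-index j = (j₁,…,jₙ) of positive natural numbers, |j|^{|j|} / (j₁^{j₁}·…·jₙ^{jₙ}) ≤ n^{|j|}, where |j| = j₁ + … + jₙ. -/
/-!
Jensen's inequality for the convex function `t ↦ t log t`, applied to the average of the `jₖ`,
gives `S log (S / n) ≤ ∑ jₖ log jₖ` with `S = |j|`; exponentiating yields `S^S ≤ n^S ∏ jₖ^jₖ`.
-/

open Finset Real

theorem Real.sum_mul_log_div_card_le {ι : Type*} (s : Finset ι) {x : ι → ℝ}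
    (hx : ∀ i ∈ s, 0 ≤ x i) :
    (∑ i ∈ s, x i) * log ((∑ i ∈ s, x i) / #s) ≤ ∑ i ∈ s, x i * log (x i) := by
  rcases s.eq_empty_or_nonempty with rfl | hs
  · simp
  have hcard : (0 : ℝ) < #s := by exact_mod_cast hs.card_pos
  have jensen := convexOn_mul_log.map_sum_le (t := s) (w := fun _ ↦ (#s : ℝ)⁻¹) (p := x)
    (fun _ _ ↦ by positivity) (by simp [hcard.ne']) hx
  simp only [smul_eq_mul, inv_mul_eq_div, ← sum_div] at jensen
  calc (∑ i ∈ s, x i) * log ((∑ i ∈ s, x i) / #s)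
      = #s * ((∑ i ∈ s, x i) / #s * log ((∑ i ∈ s, x i) / #s)) := by field_simp
    _ ≤ #s * ((∑ i ∈ s, x i * log (x i)) / #s) := by gcongr
    _ = ∑ i ∈ s, x i * log (x i) := by field_simp

theorem Nat.sum_pow_sum_le_card_pow_mul_prod {ι : Type*} (s : Finset ι) (j : ι → ℕ) :
    (∑ i ∈ s, j i) ^ (∑ i ∈ s, j i) ≤ #s ^ (∑ i ∈ s, j i) * ∏ i ∈ s, j i ^ j i := by
  have hprod : 0 < ∏ i ∈ s, j i ^ j i := prod_pos fun _ _ ↦ Nat.pow_self_pos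
  set S := ∑ i ∈ s, j i with hS
  rcases S.eq_zero_or_pos with hS0 | hSpos
  · simp only [hS0, pow_zero, one_mul]
    exact hprod
  have hs : s.Nonempty := nonempty_of_sum_ne_zero hSpos.ne'
  have jensen : (S : ℝ) * Real.log (S / #s) ≤ ∑ i ∈ s, (j i : ℝ) * Real.log (j i) := by
    simpa [hS] using
      Real.sum_mul_log_div_card_le s (x := fun i ↦ (j i : ℝ)) fun _ _ ↦ by positivity
  rw [Real.log_div (by positivity) (by positivity)] at jensen
  rw [← Nat.cast_le (α := ℝ), ← Real.log_le_log_iff (by positivity)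
    (by exact_mod_cast Nat.mul_pos (Nat.pow_pos hs.card_pos) hprod)]
  push_cast
  rw [Real.log_mul (by positivity) (by exact_mod_cast hprod.ne'),
    Real.log_prod fun _ _ ↦ by exact_mod_cast Nat.pow_self_pos.ne']
  simp only [Real.log_pow]
  linarith

theorem multiindex_power_bound_general (n : ℕ) (j : Fin n → ℕ) :
    (∑ k, j k) ^ (∑ k, j k) ≤ n ^ (∑ k, j k) * ∏ k, (j k) ^ (j k) := by
  simpa using Nat.sum_pow_sum_le_card_pow_mul_prod univ j

theorem multiindex_power_bound (n : ℕ) (j : Fin n → ℕ) (hj : ∀ k, 0 < j k) :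
    (∑ k, j k) ^ (∑ k, j k) ≤ n ^ (∑ k, j k) * ∏ k, (j k) ^ (j k) :=
  multiindex_power_bound_general n j
end

section
/- If {αⱼ}_{j∈ℕᵐ} is a family of independent standard real Gaussian random variables and ε > 0, then the event {|αⱼ| < (1+ε)^{|j|} for all j} has strictly positive probability. -/
/-!
Let `Eⱼ = {|αⱼ| < cⱼ}` with `cⱼ = (1 + ε) ^ |j|`. For a finite set `S` of indices and `k ∉ S`,
independence gives `P(⋂_{j ∈ S} Eⱼ ∩ Eₖᶜ) = P(⋂_{j ∈ S} Eⱼ) P(Eₖᶜ)`, hence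
`P(⋂ⱼ Eⱼ) ≥ P(⋂_{j ∈ S} Eⱼ) (1 - ∑_{k ∉ S} P(Eₖᶜ))`. The first factor is a finite product of
positive Gaussian probabilities. By the Chernoff bound `P(|αⱼ| ≥ c) ≤ 2 e^{1/2 - c}` and
`cⱼ ≥ 1 + |j| ε`, the series `∑ P(Eⱼᶜ)` is dominated by `∑ⱼ e^{-ε|j|} = (1 - e^{-ε})^{-m}`,
so its tail outside a large enough `S` is `< 1`.
-/

open MeasureTheory ProbabilityTheory Real
open scoped ENNReal NNReal

namespace ProbabilityTheory

variable {Ω ι : Type*} {mΩ : MeasurableSpace Ω} {μ : Measure Ω} {m : ι → MeasurableSpace Ω}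

lemma iIndep.measure_biInter_inter [DecidableEq ι] (h : iIndep m μ) {S : Finset ι}
    {E : ι → Set Ω} (hE : ∀ i ∈ S, MeasurableSet[m i] (E i)) {j : ι} (hj : j ∉ S) {F : Set Ω}
    (hF : MeasurableSet[m j] F) :
    μ ((⋂ i ∈ S, E i) ∩ F) = μ (⋂ i ∈ S, E i) * μ F := by
  have hupdate : ∀ i ∈ S, Function.update E j F i = E i := fun i hi =>
    Function.update_of_ne (ne_of_mem_of_not_mem hi hj) _ _
  have hmeas : ∀ i ∈ insert j S, MeasurableSet[m i] (Function.update E j F i) := by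
    intro i hi
    rcases Finset.mem_insert.1 hi with rfl | hi
    · simpa using hF
    · simpa [hupdate i hi] using hE i hi
  have := h.meas_biInter hmeas
  rw [Finset.set_biInter_insert, Finset.prod_insert hj, Function.update_self,
    Finset.prod_congr rfl fun i hi => congrArg μ (hupdate i hi),
    Set.iInter₂_congr hupdate] at this
  rw [Set.inter_comm, this, h.meas_biInter hE, mul_comm]

lemma iIndep.measure_iInter_ne_zero [Countable ι] (h : iIndep m μ) {E : ι → Set Ω}
    (hE : ∀ i, MeasurableSet[m i] (E i)) (hpos : ∀ i, μ (E i) ≠ 0)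
    (hsum : ∑' i, μ (E i)ᶜ ≠ ∞) :
    μ (⋂ i, E i) ≠ 0 := by
  classical
  have := h.isProbabilityMeasure
  obtain ⟨S, hS⟩ : ∃ S : Finset ι, ∑' i : {i // i ∉ S}, μ (E i)ᶜ < 1 :=
    ((ENNReal.tendsto_tsum_compl_atTop_zero hsum).eventually_lt_const one_pos).exists
  set A := ⋂ i ∈ S, E i
  have hA : μ A ≠ 0 := by
    rw [h.meas_biInter fun i _ => hE i]
    exact Finset.prod_ne_zero_iff.2 fun i _ => hpos i
  have hcover : A ⊆ (⋂ i, E i) ∪ ⋃ i : {i // i ∉ S}, A ∩ (E i)ᶜ := by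
    intro ω hω
    by_cases hall : ∀ i, ω ∈ E i
    · exact Or.inl (Set.mem_iInter.2 hall)
    · obtain ⟨i, hi⟩ := not_forall.1 hall
      have hiS : i ∉ S := fun hiS => hi (Set.mem_iInter₂.1 hω i hiS)
      exact Or.inr (Set.mem_iUnion.2 ⟨⟨i, hiS⟩, hω, hi⟩)
  intro hzero
  have hle : μ A ≤ μ A * ∑' i : {i // i ∉ S}, μ (E i)ᶜ :=
    calc μ A ≤ μ (⋂ i, E i) + μ (⋃ i : {i // i ∉ S}, A ∩ (E i)ᶜ) :=
          (measure_mono hcover).trans (measure_union_le _ _)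
      _ ≤ ∑' i : {i // i ∉ S}, μ (A ∩ (E i)ᶜ) := by
          rw [hzero, zero_add]; exact measure_iUnion_le _
      _ = μ A * ∑' i : {i // i ∉ S}, μ (E i)ᶜ := by
          rw [← ENNReal.tsum_mul_left]
          exact tsum_congr fun i => h.measure_biInter_inter (fun i _ => hE i) i.2 (hE i).compl
  have hlt := (ENNReal.mul_lt_mul_iff_right hA (measure_ne_top μ A)).2 hS
  rw [mul_one] at hlt
  exact hlt.not_ge hle

end ProbabilityTheory

section GaussianLaw

variable {Ω : Type*} {mΩ : MeasurableSpace Ω} {μ : Measure Ω} {X : Ω → ℝ}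

lemma measure_preimage_Ioo_ne_zero_of_map_eq_gaussianReal {m : ℝ} {v : ℝ≥0}
    (hX : μ.map X = gaussianReal m v) (hv : v ≠ 0) {a b : ℝ} (hab : a < b) :
    μ (X ⁻¹' Set.Ioo a b) ≠ 0 := by
  rw [← Measure.map_apply_of_aemeasurable
    (aemeasurable_of_map_neZero (by rw [hX]; infer_instance)) measurableSet_Ioo, hX]
  exact ((gaussianReal_absolutelyContinuous' m hv).pos_mono (by simpa using hab)).ne'

lemma measure_compl_preimage_Ioo_le_of_map_eq_gaussianReal [IsProbabilityMeasure μ] {v : ℝ≥0}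
    (hX : μ.map X = gaussianReal 0 v) (c : ℝ) :
    μ (X ⁻¹' Set.Ioo (-c) c)ᶜ ≤ ENNReal.ofReal (2 * exp (v / 2 - c)) := by
  have hint : ∀ t, Integrable (fun ω => exp (t * X ω)) μ := fun t => by
    rw [← mgf_pos_iff, mgf_gaussianReal hX]
    exact exp_pos _
  have hupper := measure_ge_le_exp_mul_mgf c zero_le_one (hint 1)
  have hlower := measure_le_le_exp_mul_mgf (-c) (neg_nonpos.2 zero_le_one) (hint (-1))
  rw [mgf_gaussianReal hX] at hupper hlower
  have hsplit : (X ⁻¹' Set.Ioo (-c) c)ᶜ = {ω | c ≤ X ω} ∪ {ω | X ω ≤ -c} := by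
    ext ω
    simp only [Set.mem_compl_iff, Set.mem_preimage, Set.mem_Ioo, not_and_or, not_lt,
      Set.mem_union, Set.mem_ofPred_eq]
    tauto
  rw [← ofReal_measureReal, hsplit]
  refine ENNReal.ofReal_le_ofReal ((measureReal_union_le _ _).trans ?_)
  calc _ ≤ exp (-1 * c) * exp (0 * 1 + v * 1 ^ 2 / 2)
        + exp (- -1 * -c) * exp (0 * -1 + v * (-1) ^ 2 / 2) := add_le_add hupper hlower
    _ = 2 * exp (v / 2 - c) := by
        rw [← exp_add, ← exp_add]; ring_nf

end GaussianLaw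

lemma summable_pi_prod_of_nonneg {f : ℕ → ℝ} (hf0 : ∀ n, 0 ≤ f n) (hf : Summable f) :
    ∀ m : ℕ, Summable (fun j : Fin m → ℕ => ∏ k, f (j k))
  | 0 => .of_finite
  | m + 1 => by
    refine (Fin.consEquiv fun _ => ℕ).summable_iff.1 ?_
    have hprod := hf.mul_of_nonneg (summable_pi_prod_of_nonneg hf0 hf m) hf0
      fun _ => Finset.prod_nonneg fun k _ => hf0 _
    convert hprod using 2 with x
    simp [Fin.consEquiv, Fin.prod_univ_succ]

lemma exp_neg_one_add_pow_le {ε : ℝ} (hε : 0 ≤ ε) (n : ℕ) :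
    exp (-(1 + ε) ^ n) ≤ exp (-ε) ^ n := by
  rw [← exp_nat_mul, exp_le_exp]
  nlinarith [one_add_mul_le_pow (by linarith : (-2 : ℝ) ≤ ε) n]

theorem gaussian_family_polynomial_bound_event_pos
    {m : ℕ} {Ω : Type*} [MeasurableSpace Ω] (μ : Measure Ω) [IsProbabilityMeasure μ]
    (α : (Fin m → ℕ) → Ω → ℝ)
    (hindep : iIndepFun α μ)
    (hgauss : ∀ j, Measure.map (α j) μ = gaussianReal 0 1)
    (ε : ℝ) (hε : 0 < ε) :
    0 < μ {ω | ∀ j : Fin m → ℕ, |α j ω| < (1 + ε) ^ (∑ k, j k)} := by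
  set c : (Fin m → ℕ) → ℝ := fun j => (1 + ε) ^ (∑ k, j k)
  have hevent : {ω | ∀ j, |α j ω| < c j} = ⋂ j, α j ⁻¹' Set.Ioo (-c j) (c j) := by
    ext ω; simp [abs_lt]
  have htail : ∀ j, μ (α j ⁻¹' Set.Ioo (-c j) (c j))ᶜ
      ≤ ENNReal.ofReal (2 * exp (1 / 2) * ∏ k, exp (-ε) ^ j k) := fun j => by
    refine (measure_compl_preimage_Ioo_le_of_map_eq_gaussianReal (hgauss j) (c j)).trans
      (ENNReal.ofReal_le_ofReal ?_)
    rw [Finset.prod_pow_eq_pow_sum, sub_eq_add_neg, exp_add, NNReal.coe_one, mul_assoc]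
    gcongr
    exact exp_neg_one_add_pow_le hε.le _
  have hsummable := (summable_pi_prod_of_nonneg (fun n => pow_nonneg (exp_pos (-ε)).le n)
    (summable_geometric_of_lt_one (exp_pos _).le (exp_lt_one_iff.2 (neg_neg_of_pos hε))) m
    ).mul_left (2 * exp (1 / 2))
  rw [hevent, pos_iff_ne_zero]
  refine hindep.iIndep.measure_iInter_ne_zero (fun j => ⟨_, measurableSet_Ioo, rfl⟩)
    (fun j => measure_preimage_Ioo_ne_zero_of_map_eq_gaussianReal (hgauss j) one_ne_zero ?_) ?_
  · simpa using pow_pos (by linarith : (0 : ℝ) < 1 + ε) (∑ k, j k)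
  · refine ne_top_of_le_ne_top ?_ (ENNReal.tsum_le_tsum htail)
    rw [← ENNReal.ofReal_tsum_of_nonneg (fun j => by positivity) hsummable]
    exact ENNReal.ofReal_ne_top
end

section
/- For m ≥ 1 there is a constant E_m such that Σ_{j∈ℕᵐ, |j|>24mr²} 2^{|j|/2} · r^{|j|} / √(j!) ≤ E_m for all r ≥ 1, where |j| = j₁+⋯+jₘ. In particular the tail sum Σ_{|j|>24mr²} 2^{|j|/2} (|j|/(24m))^{|j|/2} / √(j!) is bounded by a constant depending only on m. -/
/-!
Write `n = |j|`. Since `n! = multinomial(j) · j!` and the multinomial coefficient is at most `mⁿ`,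
the bound `nⁿ ≤ eⁿ n!` gives `nⁿ ≤ (e m)ⁿ j!`. Hence every term of the second sum is at most
`√(2n/(24m))ⁿ / √(j!) ≤ √(e/12)ⁿ`, and on the range `24 m r² < n` every term of the first sum is
at most the corresponding term of the second. Both sums are therefore dominated by
`Σ_{j ∈ ℕᵐ} √(e/12)^{|j|} = (1 - √(e/12))⁻ᵐ`, which does not depend on `r`.
-/

open Real Finset Nat

theorem Nat.multinomial_univ_le_card_pow {α : Type*} [Fintype α] [DecidableEq α] (f : α → ℕ) :
    multinomial univ f ≤ Fintype.card α ^ ∑ i, f i := by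
  have h := sum_pow_eq_sum_piAntidiag univ (fun _ : α => (1 : ℕ)) (∑ i, f i)
  simp only [sum_const, smul_eq_mul, mul_one, one_pow, prod_const_one, Finset.card_univ] at h
  rw [h]
  exact single_le_sum (f := fun k => multinomial univ k) (fun _ _ => Nat.zero_le _)
    (mem_piAntidiag.mpr ⟨rfl, fun i _ => mem_univ i⟩)

theorem Nat.factorial_sum_le_card_pow_mul_prod_factorial {α : Type*} [Fintype α] (f : α → ℕ) :
    (∑ i, f i)! ≤ Fintype.card α ^ (∑ i, f i) * ∏ i, (f i)! := by
  classical
  rw [← multinomial_spec, mul_comm]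
  exact Nat.mul_le_mul_right _ (multinomial_univ_le_card_pow f)

theorem Real.pow_self_le_exp_one_pow_mul_factorial (n : ℕ) : (n : ℝ) ^ n ≤ exp 1 ^ n * n ! := by
  rw [← div_le_iff₀ (by positivity), ← exp_nat_mul, mul_one]
  exact pow_div_factorial_le_exp _ n.cast_nonneg n

theorem pow_sum_le_exp_one_mul_card_pow_mul_prod_factorial {α : Type*} [Fintype α] (f : α → ℕ) :
    ((∑ i, f i : ℕ) : ℝ) ^ (∑ i, f i) ≤
      (exp 1 * Fintype.card α) ^ (∑ i, f i) * ∏ i, ((f i)! : ℝ) := by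
  set n := ∑ i, f i
  have hfact : (n ! : ℝ) ≤ (Fintype.card α : ℝ) ^ n * ∏ i, ((f i)! : ℝ) := by
    exact_mod_cast factorial_sum_le_card_pow_mul_prod_factorial f
  calc (n : ℝ) ^ n ≤ exp 1 ^ n * n ! := pow_self_le_exp_one_pow_mul_factorial n
    _ ≤ exp 1 ^ n * ((Fintype.card α : ℝ) ^ n * ∏ i, ((f i)! : ℝ)) := by gcongr
    _ = _ := by rw [mul_pow, mul_assoc]

theorem summable_pow_sum_fin {q : ℝ} (hq₀ : 0 ≤ q) (hq₁ : q < 1) :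
    ∀ m : ℕ, Summable fun j : Fin m → ℕ => q ^ ∑ k, j k
  | 0 => Summable.of_finite
  | m + 1 => by
    rw [← (Fin.consEquiv fun _ : Fin (m + 1) => ℕ).summable_iff]
    refine ((summable_geometric_of_lt_one hq₀ hq₁).mul_of_nonneg
      (summable_pow_sum_fin hq₀ hq₁ m) (fun _ => by positivity) (fun _ => by positivity)).congr
      fun p => ?_
    simp [Fin.sum_univ_succ, pow_add]

theorem summable_and_tsum_subtype_le_of_le {α : Type*} {p : α → Prop} {f : Subtype p → ℝ}
    {g : α → ℝ} (hg : Summable g) (hg₀ : ∀ a, 0 ≤ g a) (hf₀ : ∀ a, 0 ≤ f a)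
    (hfg : ∀ a, f a ≤ g a) : Summable f ∧ ∑' a, f a ≤ ∑' a, g a := by
  have hf : Summable f := (hg.subtype _).of_nonneg_of_le hf₀ hfg
  exact ⟨hf, (hf.tsum_le_tsum hfg (hg.subtype _)).trans (hg.tsum_subtype_le _ {a | p a} hg₀)⟩

theorem Real.sqrt_pow_eq_pow_sqrt {x : ℝ} (hx : 0 ≤ x) (n : ℕ) : √(x ^ n) = √x ^ n := by
  rw [sqrt_eq_iff_eq_sq (pow_nonneg hx n) (by positivity), ← pow_mul, mul_comm, pow_mul,
    sq_sqrt hx]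

theorem pow_le_rpow_div_two_of_sq_le {r x : ℝ} (hr : 0 ≤ r) (h : r ^ 2 ≤ x) (n : ℕ) :
    r ^ n ≤ x ^ ((n : ℝ) / 2) := by
  have hx : 0 ≤ x := (sq_nonneg r).trans h
  rw [rpow_div_two_eq_sqrt _ hx, rpow_natCast]
  exact pow_le_pow_left₀ hr ((le_sqrt hr hx).2 h) n

theorem two_rpow_mul_rpow_div_sqrt_le {n : ℕ} {M P : ℝ} (hM : 0 < M) (hP : 0 < P)
    (h : (n : ℝ) ^ n ≤ (exp 1 * M) ^ n * P) :
    2 ^ ((n : ℝ) / 2) * ((n : ℝ) / (24 * M)) ^ ((n : ℝ) / 2) / √P ≤ √(exp 1 / 12) ^ n := by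
  have hsq : (n / (12 * M)) ^ n ≤ (exp 1 / 12) ^ n * P := by
    rw [div_pow, div_le_iff₀ (by positivity)]
    calc (n : ℝ) ^ n ≤ (exp 1 * M) ^ n * P := h
      _ = (exp 1 / 12) ^ n * P * (12 * M) ^ n := by
        rw [div_pow, mul_pow, mul_pow]; field_simp
  rw [← mul_rpow zero_le_two (by positivity), rpow_div_two_eq_sqrt _ (by positivity),
    rpow_natCast, div_le_iff₀ (sqrt_pos.2 hP), ← sqrt_pow_eq_pow_sqrt (by positivity),
    ← sqrt_pow_eq_pow_sqrt (by positivity), ← sqrt_mul (by positivity)]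
  refine sqrt_le_sqrt (le_of_eq_of_le ?_ hsq)
  field_simp
  ring

theorem tail_sum_bounded (m : ℕ) (hm : 1 ≤ m) :
    ∃ E : ℝ, ∀ r : ℝ, 1 ≤ r →
      (Summable (fun j : {j : Fin m → ℕ // (24 * m : ℝ) * r ^ 2 < ((∑ k, j k : ℕ) : ℝ)} =>
          (2 : ℝ) ^ (((∑ k, j.1 k : ℕ) : ℝ) / 2) * r ^ (∑ k, j.1 k) /
            Real.sqrt (∏ k, Nat.factorial (j.1 k))) ∧
        (∑' j : {j : Fin m → ℕ // (24 * m : ℝ) * r ^ 2 < ((∑ k, j k : ℕ) : ℝ)},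
            (2 : ℝ) ^ (((∑ k, j.1 k : ℕ) : ℝ) / 2) * r ^ (∑ k, j.1 k) /
              Real.sqrt (∏ k, Nat.factorial (j.1 k))) ≤ E) ∧
      (Summable (fun j : {j : Fin m → ℕ // (24 * m : ℝ) * r ^ 2 < ((∑ k, j k : ℕ) : ℝ)} =>
          (2 : ℝ) ^ (((∑ k, j.1 k : ℕ) : ℝ) / 2) *
            (((∑ k, j.1 k : ℕ) : ℝ) / (24 * m)) ^ (((∑ k, j.1 k : ℕ) : ℝ) / 2) /
            Real.sqrt (∏ k, Nat.factorial (j.1 k))) ∧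
        (∑' j : {j : Fin m → ℕ // (24 * m : ℝ) * r ^ 2 < ((∑ k, j k : ℕ) : ℝ)},
            (2 : ℝ) ^ (((∑ k, j.1 k : ℕ) : ℝ) / 2) *
              (((∑ k, j.1 k : ℕ) : ℝ) / (24 * m)) ^ (((∑ k, j.1 k : ℕ) : ℝ) / 2) /
              Real.sqrt (∏ k, Nat.factorial (j.1 k))) ≤ E) := by
  have hq : √(exp 1 / 12) < 1 := (sqrt_lt' one_pos).2 (by linarith [exp_one_lt_d9])
  have hm₀ : (0 : ℝ) < m := by exact_mod_cast hm
  have hbound (j : Fin m → ℕ) :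
      (2 : ℝ) ^ (((∑ k, j k : ℕ) : ℝ) / 2) *
        (((∑ k, j k : ℕ) : ℝ) / (24 * m)) ^ (((∑ k, j k : ℕ) : ℝ) / 2) /
        Real.sqrt (∏ k, Nat.factorial (j k)) ≤ √(exp 1 / 12) ^ ∑ k, j k :=
    two_rpow_mul_rpow_div_sqrt_le hm₀ (by positivity)
      (by simpa using pow_sum_le_exp_one_mul_card_pow_mul_prod_factorial j)
  have hsum := summable_pow_sum_fin (sqrt_nonneg _) hq m
  have hg₀ (j : Fin m → ℕ) : 0 ≤ √(exp 1 / 12) ^ ∑ k, j k := by positivity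
  refine ⟨_, fun r hr => ⟨summable_and_tsum_subtype_le_of_le hsum hg₀ (fun _ => by positivity)
    fun j => le_trans ?_ (hbound j), summable_and_tsum_subtype_le_of_le hsum hg₀
      (fun _ => by positivity) fun j => hbound j⟩⟩
  gcongr
  refine pow_le_rpow_div_two_of_sq_le (by linarith) ?_ _
  rw [le_div_iff₀ (by positivity)]
  linarith [j.2]
end
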